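/- Let K be a nonempty compact topological space and let g, g̃ : K → ℝ be continuous functions with g(x) ≥ g0 > 0 for all x ∈ K. Then for all real numbers a, b there exists z0 ∈ K such that |a·g(z0) + b·g̃(z0)| ≥ (g0·|b|/2)·( max_{x∈K} (g̃(x)/g(x)) − min_{x∈K} (g̃(x)/g(x)) ). -/
import Mathlib


open Set

/-- Let `K` be a nonempty compact topological space and `g, g̃ : K → ℝ` continuous with
`g ≥ g0 > 0` on `K`. Then for all reals `a, b` there exists `z0 ∈ K` with
`|a g(z0) + b g̃(z0)| ≥ (g0 |b| / 2) (max_K (g̃/g) − min_K (g̃/g))`. -/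
theorem exists_point_with_large_combination
    {K : Type*} [TopologicalSpace K] [CompactSpace K] [Nonempty K]
    (g gt : K → ℝ) (hg : Continuous g) (hgt : Continuous gt)
    (g0 : ℝ) (hg0 : 0 < g0) (hlb : ∀ x, g0 ≤ g x) :
    ∀ a b : ℝ, ∃ z0 : K,
      g0 * |b| / 2 *
          (sSup (range fun x => gt x / g x) - sInf (range fun x => gt x / g x)) ≤
        |a * g z0 + b * gt z0| := by
  have hgpos : ∀ x, 0 < g x := fun x => hg0.trans_le (hlb x)
  set h : K → ℝ := fun x => gt x / g x with hh_def
  have hh : Continuous h := hgt.div hg (fun x => (hgpos x).ne')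
  obtain ⟨xM, -, hM⟩ := isCompact_univ.exists_isMaxOn univ_nonempty hh.continuousOn
  obtain ⟨xm, -, hm⟩ := isCompact_univ.exists_isMinOn univ_nonempty hh.continuousOn
  have hMb : ∀ x, h x ≤ h xM := fun x => hM (mem_univ x)
  have hmb : ∀ x, h xm ≤ h x := fun x => hm (mem_univ x)
  have hsup : sSup (range h) = h xM :=
    le_antisymm (csSup_le (range_nonempty _) (by rintro _ ⟨x, rfl⟩; exact hMb x))
      (le_csSup ⟨h xM, by rintro _ ⟨x, rfl⟩; exact hMb x⟩ (mem_range_self _))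
  have hinf : sInf (range h) = h xm :=
    le_antisymm (csInf_le ⟨h xm, by rintro _ ⟨x, rfl⟩; exact hmb x⟩ (mem_range_self _))
      (le_csInf (range_nonempty _) (by rintro _ ⟨x, rfl⟩; exact hmb x))
  intro a b
  have key : ∀ z : K, |a * g z + b * gt z| = g z * |a + b * h z| := by
    intro z
    have : a * g z + b * gt z = g z * (a + b * h z) := by
      have hz := (hgpos z).ne'
      simp only [hh_def]
      field_simp
    rw [this, abs_mul, abs_of_pos (hgpos z)]
  have hMm : h xm ≤ h xM := hmb xM
  have habs : |b| * (h xM - h xm) ≤ |a + b * h xM| + |a + b * h xm| := by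
    have : |b| * (h xM - h xm) = |(a + b * h xM) - (a + b * h xm)| := by
      rw [show (a + b * h xM) - (a + b * h xm) = b * (h xM - h xm) by ring,
        abs_mul, abs_of_nonneg (sub_nonneg.2 hMm)]
    rw [this]
    exact abs_sub (a + b * h xM) (a + b * h xm)
  rw [hsup, hinf]
  rcases le_total |a + b * h xm| |a + b * h xM| with hc | hc
  · refine ⟨xM, ?_⟩
    rw [key xM]
    have h1 : g0 ≤ g xM := hlb xM
    nlinarith [abs_nonneg (a + b * h xM), hgpos xM]
  · refine ⟨xm, ?_⟩
    rw [key xm]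
    have h1 : g0 ≤ g xm := hlb xm
    nlinarith [abs_nonneg (a + b * h xm), hgpos xm]
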